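/- For every dotted composition α = (α_1,…,α_ℓ) and all natural numbers M, N, the following identity holds in A_{M+N}: M_α(B₁ ∪ B₂) = Σ_{k=0}^{ℓ} M_{(α_1,…,α_k)}(B₁) · M_{(α_{k+1},…,α_ℓ)}(B₂), where B₁ is the set of the first M indices and B₂ the set of the last N indices of Fin (M+N), and M_∅(B) = 1. (This is the two-alphabet form of the deconcatenation coproduct Δ(M_α) = Σ_{β·γ=α} M_β ⊗ M_γ on monomial quasisymmetric functions in superspace.) -/

import Mathlib

open TensorProduct

set_option synthInstance.maxHeartbeats 1000000
set_option maxHeartbeats 1000000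

noncomputable section

/-- The ring of polynomials in superspace in `N` variables. -/
abbrev SuperAlg (N : ℕ) : Type :=
  MvPolynomial (Fin N) ℚ ⊗[ℚ] ExteriorAlgebra ℚ (Fin N → ℚ)

/-- The (bosonic) variable `x_i`. -/
def sx {N : ℕ} (i : Fin N) : SuperAlg N := MvPolynomial.X i ⊗ₜ[ℚ] 1

/-- The (fermionic) variable `θ_i`. -/
def sθ {N : ℕ} (i : Fin N) : SuperAlg N :=
  1 ⊗ₜ[ℚ] ExteriorAlgebra.ι ℚ (Pi.single i 1)

/-- A dotted composition is a list of parts `(a, η)` where `η = true` marks a dotted part,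
and undotted parts must be positive. -/
def IsDottedComp (α : List (ℕ × Bool)) : Prop :=
  ∀ p ∈ α, p.2 = false → 1 ≤ p.1

/-- The monomial quasisymmetric function in superspace `M_α(B)` on the alphabet `B`:
the sum over `i_1 < ⋯ < i_ℓ` in `B` of `θ_{i_1}^{η_1} x_{i_1}^{a_1} ⋯ θ_{i_ℓ}^{η_ℓ} x_{i_ℓ}^{a_ℓ}`
(each strictly increasing tuple being encoded as a subset of `B` of size `ℓ`,
listed in increasing order). -/
def Mqs {N : ℕ} (α : List (ℕ × Bool)) (B : Finset (Fin N)) : SuperAlg N :=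
  ∑ S ∈ B.powersetCard α.length,
    (List.zipWith (fun i p => (if p.2 then sθ i else 1) * sx i ^ p.1)
      (S.sort (· ≤ ·)) α).prod

/-!
**Statement 5.** Two-alphabet (deconcatenation) coproduct formula for the monomial
quasisymmetric functions in superspace: with `B₁` the first `M` indices and `B₂` the
last `N` indices of `Fin (M+N)`,
`M_α(B₁ ∪ B₂) = Σ_{k=0}^{ℓ} M_{(α_1,…,α_k)}(B₁) · M_{(α_{k+1},…,α_ℓ)}(B₂)`.
-/

lemma sort_union_of_lt {n : ℕ} (S₁ S₂ : Finset (Fin n))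
    (h : ∀ a ∈ S₁, ∀ b ∈ S₂, a < b) :
    (S₁ ∪ S₂).sort (· ≤ ·) = S₁.sort (· ≤ ·) ++ S₂.sort (· ≤ ·) := by
  have hd : Disjoint S₁ S₂ :=
    Finset.disjoint_left.2 fun a ha hb => lt_irrefl a (h a ha a hb)
  have hval : (S₁.disjUnion S₂ hd).val = S₁.val + S₂.val := rfl
  have hperm : List.Perm ((S₁ ∪ S₂).sort (· ≤ ·))
      (S₁.sort (· ≤ ·) ++ S₂.sort (· ≤ ·)) := by
    rw [← Multiset.coe_eq_coe, Finset.sort_eq, ← Finset.disjUnion_eq_union _ _ hd,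
      hval, ← Multiset.coe_add, Finset.sort_eq, Finset.sort_eq]
  refine List.Perm.eq_of_pairwise (fun a b _ _ h1 h2 => absurd (h1.trans h2) (lt_irrefl a)) (Finset.sortedLT_sort _).pairwise ?_ hperm
  rw [List.pairwise_append]
  exact ⟨(Finset.sortedLT_sort _).pairwise, (Finset.sortedLT_sort _).pairwise,
    fun a ha b hb => h a (by simpa using (Finset.mem_sort _).1 ha)
      b (by simpa using (Finset.mem_sort _).1 hb)⟩

theorem Mqs_superspace_coproduct (α : List (ℕ × Bool)) (hα : IsDottedComp α) (M N : ℕ) :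
    Mqs α ((Finset.univ.image (Fin.castAdd N)) ∪ (Finset.univ.image (Fin.natAdd M)))
      = ∑ k ∈ Finset.range (α.length + 1),
          Mqs (α.take k) (Finset.univ.image (Fin.castAdd N)) *
            Mqs (α.drop k) (Finset.univ.image (Fin.natAdd M)) := by
  classical
  set ℓ := α.length with hℓ
  set B₁ : Finset (Fin (M+N)) := Finset.univ.image (Fin.castAdd N) with hB₁def
  set B₂ : Finset (Fin (M+N)) := Finset.univ.image (Fin.natAdd M) with hB₂def
  set g : Fin (M+N) → ℕ × Bool → SuperAlg (M+N) :=
    fun i p => (if p.2 then sθ i else 1) * sx i ^ p.1 with hg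
  have hlt : ∀ a ∈ B₁, ∀ b ∈ B₂, a < b := by
    intro a ha b hb
    simp only [hB₁def, hB₂def, Finset.mem_image, Finset.mem_univ, true_and] at ha hb
    obtain ⟨i, rfl⟩ := ha; obtain ⟨j, rfl⟩ := hb
    simp only [Fin.lt_def, Fin.coe_castAdd, Fin.coe_natAdd]
    omega
  have hd : Disjoint B₁ B₂ :=
    Finset.disjoint_left.2 fun a ha hb => lt_irrefl a (hlt a ha a hb)
  have hR : ∀ k ∈ Finset.range (ℓ + 1),
      Mqs (α.take k) B₁ * Mqs (α.drop k) B₂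
        = ∑ p ∈ (B₁.powersetCard (α.take k).length) ×ˢ
            (B₂.powersetCard (α.drop k).length),
            (List.zipWith g (p.1.sort (· ≤ ·)) (α.take k)).prod *
            (List.zipWith g (p.2.sort (· ≤ ·)) (α.drop k)).prod := by
    intro k _
    rw [Mqs, Mqs, Finset.sum_mul_sum, ← Finset.sum_product']
  rw [Finset.sum_congr rfl hR]
  refine Eq.trans ?_ (Finset.sum_sigma' (Finset.range (ℓ + 1))
    (fun k => (B₁.powersetCard (α.take k).length) ×ˢ (B₂.powersetCard (α.drop k).length))
    (fun k p => (List.zipWith g (p.1.sort (· ≤ ·)) (α.take k)).prod *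
      (List.zipWith g (p.2.sort (· ≤ ·)) (α.drop k)).prod)).symm
  rw [Mqs]
  refine Finset.sum_nbij' (fun S => ⟨(S ∩ B₁).card, (S ∩ B₁, S ∩ B₂)⟩)
    (fun x => x.2.1 ∪ x.2.2) ?_ ?_ ?_ ?_ ?_
  · -- maps to
    intro S hS
    rw [Finset.mem_powersetCard] at hS
    obtain ⟨hsub, hcard⟩ := hS
    have hSeq : (S ∩ B₁) ∪ (S ∩ B₂) = S := by
      rw [← Finset.inter_union_distrib_left, Finset.inter_eq_left.2 hsub]
    have hdisj : Disjoint (S ∩ B₁) (S ∩ B₂) :=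
      hd.mono Finset.inter_subset_right Finset.inter_subset_right
    have hcards : (S ∩ B₁).card + (S ∩ B₂).card = ℓ := by
      rw [← Finset.card_union_of_disjoint hdisj, hSeq, hcard]
    have hk : (S ∩ B₁).card ≤ ℓ := by omega
    simp only [Finset.mem_sigma, Finset.mem_range, Finset.mem_product,
      Finset.mem_powersetCard, List.length_take, List.length_drop]
    refine ⟨by omega, ⟨Finset.inter_subset_right, by omega⟩,
      ⟨Finset.inter_subset_right, by omega⟩⟩
  · -- maps back
    intro x hx
    obtain ⟨k, S₁, S₂⟩ := x
    simp only [Finset.mem_sigma, Finset.mem_range, Finset.mem_product,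
      Finset.mem_powersetCard] at hx
    obtain ⟨hk, ⟨hsub₁, hc₁⟩, hsub₂, hc₂⟩ := hx
    rw [Finset.mem_powersetCard]
    refine ⟨Finset.union_subset_union hsub₁ hsub₂, ?_⟩
    rw [Finset.card_union_of_disjoint (hd.mono hsub₁ hsub₂), hc₁, hc₂,
      List.length_take, List.length_drop]
    omega
  · -- left inverse
    intro S hS
    dsimp only
    rw [Finset.mem_powersetCard] at hS
    rw [← Finset.inter_union_distrib_left, Finset.inter_eq_left.2 hS.1]
  · -- right inverse
    intro x hx
    obtain ⟨k, S₁, S₂⟩ := x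
    simp only [Finset.mem_sigma, Finset.mem_range, Finset.mem_product,
      Finset.mem_powersetCard] at hx
    obtain ⟨hk, ⟨hsub₁, hc₁⟩, hsub₂, hc₂⟩ := hx
    have h1 : (S₁ ∪ S₂) ∩ B₁ = S₁ := by
      rw [Finset.union_inter_distrib_right, Finset.inter_eq_left.2 hsub₁,
        Finset.disjoint_iff_inter_eq_empty.1 (Finset.disjoint_left.2 fun a ha hb =>
          Finset.disjoint_left.1 hd hb (hsub₂ ha)), Finset.union_empty]
    have h2 : (S₁ ∪ S₂) ∩ B₂ = S₂ := by
      rw [Finset.union_inter_distrib_right, Finset.inter_eq_left.2 hsub₂,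
        Finset.disjoint_iff_inter_eq_empty.1 (Finset.disjoint_left.2 fun a ha hb =>
          Finset.disjoint_left.1 hd (hsub₁ ha) hb), Finset.empty_union]
    have hkk : k = (α.take k).length := by rw [List.length_take]; omega
    simp [h1, h2, hc₁, ← hkk]
  · -- values agree
    intro S hS
    dsimp only
    rw [Finset.mem_powersetCard] at hS
    obtain ⟨hsub, hcard⟩ := hS
    have hSeq : S = (S ∩ B₁) ∪ (S ∩ B₂) := by
      rw [← Finset.inter_union_distrib_left, Finset.inter_eq_left.2 hsub]
    have hdisj : Disjoint (S ∩ B₁) (S ∩ B₂) :=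
      hd.mono Finset.inter_subset_right Finset.inter_subset_right
    have hcards : (S ∩ B₁).card + (S ∩ B₂).card = ℓ := by
      rw [← Finset.card_union_of_disjoint hdisj, ← hSeq, hcard]
    set k := (S ∩ B₁).card with hkdef
    have hsort : S.sort (· ≤ ·) = (S ∩ B₁).sort (· ≤ ·) ++ (S ∩ B₂).sort (· ≤ ·) := by
      conv_lhs => rw [hSeq]
      exact sort_union_of_lt _ _ (fun a ha b hb =>
        hlt a (Finset.mem_inter.1 ha).2 b (Finset.mem_inter.1 hb).2)
    have hlen : ((S ∩ B₁).sort (· ≤ ·)).length = (α.take k).length := by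
      rw [Finset.length_sort, List.length_take]; omega
    calc (List.zipWith g (S.sort (· ≤ ·)) α).prod
        = (List.zipWith g ((S ∩ B₁).sort (· ≤ ·) ++ (S ∩ B₂).sort (· ≤ ·))
            (α.take k ++ α.drop k)).prod := by rw [hsort, List.take_append_drop]
      _ = _ := by
          rw [List.zipWith_append hlen, List.prod_append]

end
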